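/- arXiv:2304.08774 — 4 statements merged into one kernel-verified Lean document; each statement's English description precedes it below -/
import Mathlib

section
/- Let λ ∈ [0,1] and let x be a k-subset that does not minimize f_λ among all k-subsets. Then there exist items i ∈ x and j ∉ x such that f_λ((x \ {i}) ∪ {j}) < f_λ(x). -/
open Finset

/-- If a `k`-subset `x` does not minimize `f_λ` among `k`-subsets, then some single
swap (removing `i ∈ x` and inserting `j ∉ x`) strictly decreases `f_λ`. -/
theorem non_minimizer_has_improving_swap
    (n k : ℕ) (μ σ2 : Fin n → ℝ)
    (hμ : ∀ i, 1 ≤ μ i) (hσ : ∀ i, 1 ≤ σ2 i)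
    (lam : ℝ) (hlam : lam ∈ Set.Icc (0 : ℝ) 1)
    (x : Finset (Fin n)) (hx : x.card = k)
    (hnotmin : ¬ ∀ y : Finset (Fin n), y.card = k →
      lam * (∑ i ∈ x, μ i) + (1 - lam) * (∑ i ∈ x, σ2 i) ≤
        lam * (∑ i ∈ y, μ i) + (1 - lam) * (∑ i ∈ y, σ2 i)) :
    ∃ i ∈ x, ∃ j ∉ x,
      lam * (∑ l ∈ insert j (x.erase i), μ l) +
          (1 - lam) * (∑ l ∈ insert j (x.erase i), σ2 l) <
        lam * (∑ l ∈ x, μ l) + (1 - lam) * (∑ l ∈ x, σ2 l) := by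
  set g : Fin n → ℝ := fun i => lam * μ i + (1 - lam) * σ2 i with hg
  have key : ∀ s : Finset (Fin n),
      lam * (∑ i ∈ s, μ i) + (1 - lam) * (∑ i ∈ s, σ2 i) = ∑ i ∈ s, g i := by
    intro s
    simp [hg, Finset.mul_sum, Finset.sum_add_distrib]
  push_neg at hnotmin
  obtain ⟨y, hy, hlt⟩ := hnotmin
  rw [key, key] at hlt
  have hne : x ≠ y := by rintro rfl; exact lt_irrefl _ hlt
  have hcard : (x \ y).card = (y \ x).card := Finset.card_sdiff_comm (hx.trans hy.symm)
  have hxy : (x \ y).Nonempty := by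
    rw [Finset.sdiff_nonempty]
    intro hsub
    exact hne (Finset.eq_of_subset_of_card_le hsub (hy.trans hx.symm).le)
  have hyx : (y \ x).Nonempty := by
    rw [Finset.sdiff_nonempty]
    intro hsub
    exact hne ((Finset.eq_of_subset_of_card_le hsub (hx.trans hy.symm).le).symm)
  -- sums over symmetric differences
  have hsum : ∑ i ∈ y \ x, g i < ∑ i ∈ x \ y, g i := by
    have hx' : ∑ i ∈ x ∩ y, g i + ∑ i ∈ x \ y, g i = ∑ i ∈ x, g i :=
      Finset.sum_inter_add_sum_sdiff x y g
    have hy' : ∑ i ∈ y ∩ x, g i + ∑ i ∈ y \ x, g i = ∑ i ∈ y, g i :=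
      Finset.sum_inter_add_sum_sdiff y x g
    rw [← hx', ← hy', Finset.inter_comm y x] at hlt
    linarith
  obtain ⟨i, hi, hiMax⟩ := Finset.exists_max_image (x \ y) g hxy
  obtain ⟨j, hj, hjMin⟩ := Finset.exists_min_image (y \ x) g hyx
  have hji : g j < g i := by
    have h1 : (y \ x).card • g j ≤ ∑ i ∈ y \ x, g i :=
      Finset.card_nsmul_le_sum _ _ _ (fun a ha => hjMin a ha)
    have h2 : ∑ a ∈ x \ y, g a ≤ (x \ y).card • g i :=
      Finset.sum_le_card_nsmul _ _ _ (fun a ha => hiMax a ha)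
    rw [hcard] at h2
    have hm : 0 < (y \ x).card := Finset.card_pos.mpr hyx
    have := lt_of_le_of_lt h1 (lt_of_lt_of_le hsum h2)
    simp only [nsmul_eq_mul] at this
    have hmr : (0 : ℝ) < (y \ x).card := by exact_mod_cast hm
    exact lt_of_mul_lt_mul_left this hmr.le
  have hix : i ∈ x := (Finset.mem_sdiff.mp hi).1
  have hjx : j ∉ x := (Finset.mem_sdiff.mp hj).2
  refine ⟨i, hix, j, hjx, ?_⟩
  rw [key, key]
  have hje : j ∉ x.erase i := fun h => hjx (Finset.mem_of_mem_erase h)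
  rw [Finset.sum_insert hje, Finset.sum_erase_eq_sub hix]
  linarith
end

section
/- Let 0 ≤ λ₁ ≤ λ₂ ≤ 1 and suppose that for all items i, j and all λ, λ' ∈ [λ₁, λ₂] one has f_λ(i) ≤ f_λ(j) if and only if f_{λ'}(i) ≤ f_{λ'}(j). Then for every k and every k-subset x: x minimizes f_{λ₁} among all k-subsets if and only if x minimizes f_λ among all k-subsets for every λ ∈ [λ₁, λ₂]. -/
open Finset

/-- A `k`-subset minimizes `∑ F` among `k`-subsets iff every element inside has
`F`-value at most that of every element outside. -/
theorem min_iff_pointwise {n : ℕ} (F : Fin n → ℝ) (k : ℕ) (x : Finset (Fin n))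
    (hx : x.card = k) :
    (∀ y : Finset (Fin n), y.card = k → ∑ i ∈ x, F i ≤ ∑ i ∈ y, F i) ↔
      (∀ i ∈ x, ∀ j, j ∉ x → F i ≤ F j) := by
  constructor
  · intro H i hi j hj
    by_contra hlt
    push_neg at hlt
    have hne : j ∉ x.erase i := fun h => hj (Finset.mem_of_mem_erase h)
    have hcard : (insert j (x.erase i)).card = k := by
      rw [Finset.card_insert_of_notMem hne, Finset.card_erase_of_mem hi, hx]
      have : 1 ≤ k := hx ▸ Finset.card_pos.mpr ⟨i, hi⟩
      omega
    have := H _ hcard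
    rw [Finset.sum_insert hne, Finset.sum_erase_eq_sub hi] at this
    linarith
  · intro H y hy
    have hsplit : ∀ s t : Finset (Fin n), ∑ i ∈ s, F i = ∑ i ∈ s \ t, F i + ∑ i ∈ s ∩ t, F i := by
      intro s t
      rw [← Finset.sum_union (Finset.disjoint_sdiff_inter s t), Finset.sdiff_union_inter]
    rw [hsplit x y, hsplit y x, Finset.inter_comm y x]
    have hcard : (x \ y).card = (y \ x).card := by
      have h1 := Finset.card_sdiff_add_card_inter x y
      have h2 := Finset.card_sdiff_add_card_inter y x
      rw [Finset.inter_comm y x] at h2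
      omega
    have key : ∑ i ∈ x \ y, F i ≤ ∑ i ∈ y \ x, F i := by
      obtain e := Finset.equivOfCardEq hcard
      rw [← Finset.sum_coe_sort (x \ y), ← Finset.sum_coe_sort (y \ x),
        ← Equiv.sum_comp e (fun b : (y \ x : Finset (Fin n)) => F b)]
      apply Finset.sum_le_sum
      intro a _
      have ha := a.2
      have he := (e a).2
      rw [Finset.mem_sdiff] at ha he
      exact H a ha.1 (e a) he.2
    linarith

/-- If the `f_λ`-order of the items is the same for all `λ ∈ [λ₁, λ₂]`, then a `k`-subset
minimizes `f_{λ₁}` among `k`-subsets iff it minimizes `f_λ` among `k`-subsets for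
every `λ ∈ [λ₁, λ₂]`. -/
theorem same_order_minimizer_iff
    (n : ℕ) (μ σ2 : Fin n → ℝ)
    (hμ : ∀ i, 1 ≤ μ i) (hσ : ∀ i, 1 ≤ σ2 i)
    (lam1 lam2 : ℝ) (h01 : 0 ≤ lam1) (h12 : lam1 ≤ lam2) (h21 : lam2 ≤ 1)
    (horder : ∀ i j : Fin n, ∀ lam ∈ Set.Icc lam1 lam2, ∀ lam' ∈ Set.Icc lam1 lam2,
      (lam * μ i + (1 - lam) * σ2 i ≤ lam * μ j + (1 - lam) * σ2 j ↔
        lam' * μ i + (1 - lam') * σ2 i ≤ lam' * μ j + (1 - lam') * σ2 j)) :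
    ∀ (k : ℕ) (x : Finset (Fin n)), x.card = k →
      ((∀ y : Finset (Fin n), y.card = k →
          lam1 * (∑ i ∈ x, μ i) + (1 - lam1) * (∑ i ∈ x, σ2 i) ≤
            lam1 * (∑ i ∈ y, μ i) + (1 - lam1) * (∑ i ∈ y, σ2 i)) ↔
        (∀ lam ∈ Set.Icc lam1 lam2, ∀ y : Finset (Fin n), y.card = k →
          lam * (∑ i ∈ x, μ i) + (1 - lam) * (∑ i ∈ x, σ2 i) ≤
            lam * (∑ i ∈ y, μ i) + (1 - lam) * (∑ i ∈ y, σ2 i))) := by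
  intro k x hx
  have hmem1 : lam1 ∈ Set.Icc lam1 lam2 := ⟨le_refl _, h12⟩
  have hsum : ∀ (lam : ℝ) (s : Finset (Fin n)),
      lam * (∑ i ∈ s, μ i) + (1 - lam) * (∑ i ∈ s, σ2 i)
        = ∑ i ∈ s, (lam * μ i + (1 - lam) * σ2 i) := by
    intro lam s
    rw [Finset.sum_add_distrib, Finset.mul_sum, Finset.mul_sum]
  constructor
  · intro H lam hlam y hy
    rw [hsum, hsum]
    refine (min_iff_pointwise _ k x hx).mpr ?_ y hy
    intro i hi j hj
    rw [horder i j lam hlam lam1 hmem1]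
    have H' : ∀ y : Finset (Fin n), y.card = k →
        ∑ i ∈ x, (lam1 * μ i + (1 - lam1) * σ2 i) ≤
          ∑ i ∈ y, (lam1 * μ i + (1 - lam1) * σ2 i) := by
      intro z hz
      rw [← hsum, ← hsum]
      exact H z hz
    exact (min_iff_pointwise _ k x hx).mp H' i hi j hj
  · intro H y hy
    exact H lam1 hmem1 y hy
end

section
/- Let S be a finite nonempty subset of ℝ × [0, ∞) and let K ≥ 0. Then there exist λ ∈ [0,1] and (p*, q*) ∈ S such that (p*, q*) minimizes the function (p, q) ↦ λ·p + (1−λ)·q over S, and p* + K·√(q*) = min_{(p,q)∈S} (p + K·√q). -/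
open Finset

/-- For a finite nonempty `S ⊆ ℝ × [0,∞)` and `K ≥ 0`, some point of `S` minimizing a
linear scalarization `λ·p + (1−λ)·q` (for some `λ ∈ [0,1]`) also attains the minimum of
`p + K·√q` over `S`. -/
theorem scalarization_attains_sqrt_min
    (S : Finset (ℝ × ℝ)) (hS : S.Nonempty) (hSnn : ∀ pq ∈ S, 0 ≤ pq.2)
    (K : ℝ) (hK : 0 ≤ K) :
    ∃ lam ∈ Set.Icc (0 : ℝ) 1, ∃ pq ∈ S,
      (∀ ab ∈ S, lam * pq.1 + (1 - lam) * pq.2 ≤ lam * ab.1 + (1 - lam) * ab.2) ∧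
      pq.1 + K * Real.sqrt pq.2 =
        (S.image fun ab => ab.1 + K * Real.sqrt ab.2).min' (hS.image _) := by
  obtain ⟨pq, hpqS, hmin⟩ := S.exists_min_image (fun ab => ab.1 + K * Real.sqrt ab.2) hS
  have hval : pq.1 + K * Real.sqrt pq.2 =
      (S.image fun ab => ab.1 + K * Real.sqrt ab.2).min' (hS.image _) := by
    apply le_antisymm
    · obtain ⟨ab, habS, hab⟩ := Finset.mem_image.1 ((S.image (fun ab => ab.1 + K * Real.sqrt ab.2)).min'_mem (hS.image _))
      rw [← hab]; exact hmin ab habS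
    · exact Finset.min'_le _ _ (Finset.mem_image_of_mem _ hpqS)
  have hq : 0 ≤ pq.2 := hSnn pq hpqS
  rcases eq_or_lt_of_le hq with hq0 | hq0
  · -- q* = 0 : take λ = 0
    refine ⟨0, ⟨le_refl _, zero_le_one⟩, pq, hpqS, fun ab hab => ?_, hval⟩
    simp [← hq0]
    exact hSnn ab hab
  · -- q* > 0
    set s := Real.sqrt pq.2 with hs
    have hspos : 0 < s := Real.sqrt_pos.2 hq0
    have hs2 : s ^ 2 = pq.2 := Real.sq_sqrt hq
    have hden : 0 < 2 * s + K := by linarith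
    refine ⟨2 * s / (2 * s + K), ⟨by positivity, by
      rw [div_le_one hden]; linarith⟩, pq, hpqS, fun ab hab => ?_, hval⟩
    have hab2 : 0 ≤ ab.2 := hSnn ab hab
    have habs : Real.sqrt ab.2 ^ 2 = ab.2 := Real.sq_sqrt hab2
    have hmab := hmin ab hab
    have hsq := sq_nonneg (Real.sqrt ab.2 - s)
    have key : 2 * s * pq.1 + K * pq.2 ≤ 2 * s * ab.1 + K * ab.2 := by
      nlinarith [mul_nonneg hK hsq, mul_le_mul_of_nonneg_left hmab (le_of_lt (by linarith : (0:ℝ) < 2 * s))]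
    have h1l : 1 - 2 * s / (2 * s + K) = K / (2 * s + K) := by
      field_simp
      ring
    rw [h1l, div_mul_eq_mul_div, div_mul_eq_mul_div, div_mul_eq_mul_div,
      div_mul_eq_mul_div, ← add_div, ← add_div]
    exact (div_le_div_iff_of_pos_right hden).2 key
end

section
/- For every K ≥ 0 and every k with 0 ≤ k ≤ n, there exist λ ∈ [0,1] and a k-subset x such that x minimizes f_λ among all k-subsets and ŵ_K(x) equals the minimum of ŵ_K over all k-subsets. -/
open Finset

/-- Tangent line inequality for `sqrt`: for `a > 0`, `t ≥ 0`,
`√t ≤ √a + (t - a)/(2√a)`. -/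
lemma sqrt_tangent (a t : ℝ) (ha : 0 < a) (ht : 0 ≤ t) :
    Real.sqrt t ≤ Real.sqrt a + (t - a) / (2 * Real.sqrt a) := by
  have hsa : 0 < Real.sqrt a := Real.sqrt_pos.mpr ha
  have hst : 0 ≤ Real.sqrt t := Real.sqrt_nonneg t
  have h1 : Real.sqrt a * Real.sqrt a = a := Real.mul_self_sqrt ha.le
  have h2 : Real.sqrt t * Real.sqrt t = t := Real.mul_self_sqrt ht
  have h3 : Real.sqrt a + (t - a) / (2 * Real.sqrt a) = (a + t) / (2 * Real.sqrt a) := by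
    field_simp
    nlinarith [h1]
  rw [h3, le_div_iff₀ (by positivity)]
  nlinarith [sq_nonneg (Real.sqrt a - Real.sqrt t)]

/-- For every `K ≥ 0` and `k ≤ n` there exist `λ ∈ [0,1]` and a `k`-subset `x` that
minimizes `f_λ` among `k`-subsets and whose `ŵ_K`-value is minimal among `k`-subsets. -/
theorem exists_scalarized_minimizer_attaining_chance_min
    (n k : ℕ) (μ σ2 : Fin n → ℝ)
    (hμ : ∀ i, 1 ≤ μ i) (hσ : ∀ i, 1 ≤ σ2 i)
    (K : ℝ) (hK : 0 ≤ K) (hk : k ≤ n) :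
    ∃ lam ∈ Set.Icc (0 : ℝ) 1, ∃ x : Finset (Fin n), x.card = k ∧
      (∀ y : Finset (Fin n), y.card = k →
        lam * (∑ i ∈ x, μ i) + (1 - lam) * (∑ i ∈ x, σ2 i) ≤
          lam * (∑ i ∈ y, μ i) + (1 - lam) * (∑ i ∈ y, σ2 i)) ∧
      (∀ y : Finset (Fin n), y.card = k →
        (∑ i ∈ x, μ i) + K * Real.sqrt (∑ i ∈ x, σ2 i) ≤
          (∑ i ∈ y, μ i) + K * Real.sqrt (∑ i ∈ y, σ2 i)) := by
  rcases Nat.eq_zero_or_pos k with hk0 | hkpos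
  · -- k = 0 : the only 0-subset is ∅
    refine ⟨1, ⟨zero_le_one, le_refl 1⟩, ∅, by simp [hk0], ?_, ?_⟩ <;>
    · intro y hy
      have : y = ∅ := Finset.card_eq_zero.mp (by rw [hy, hk0])
      simp [this]
  · -- k ≥ 1 : pick a ŵ_K-minimizer among k-subsets
    have hne : (Finset.univ.filter (fun s : Finset (Fin n) => s.card = k)).Nonempty := by
      obtain ⟨t, _, ht⟩ := Finset.exists_subset_card_eq (s := (Finset.univ : Finset (Fin n))) (n := k)
        (by simpa using hk)
      exact ⟨t, by simp [ht]⟩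
    obtain ⟨x, hxmem, hxmin⟩ := Finset.exists_min_image
      (Finset.univ.filter (fun s : Finset (Fin n) => s.card = k))
      (fun s => (∑ i ∈ s, μ i) + K * Real.sqrt (∑ i ∈ s, σ2 i)) hne
    have hxcard : x.card = k := (Finset.mem_filter.mp hxmem).2
    have hxminy : ∀ y : Finset (Fin n), y.card = k →
        (∑ i ∈ x, μ i) + K * Real.sqrt (∑ i ∈ x, σ2 i) ≤
          (∑ i ∈ y, μ i) + K * Real.sqrt (∑ i ∈ y, σ2 i) := by
      intro y hy
      exact hxmin y (Finset.mem_filter.mpr ⟨Finset.mem_univ y, hy⟩)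
    -- variance of x is positive
    have hvx : (1 : ℝ) ≤ ∑ i ∈ x, σ2 i := by
      calc (1 : ℝ) ≤ (k : ℝ) := by exact_mod_cast hkpos
        _ = ∑ _i ∈ x, (1 : ℝ) := by simp [hxcard]
        _ ≤ ∑ i ∈ x, σ2 i := Finset.sum_le_sum (fun i _ => hσ i)
    set vx : ℝ := ∑ i ∈ x, σ2 i with hvxdef
    have hvxpos : 0 < vx := lt_of_lt_of_le one_pos hvx
    have hsvx : 0 < Real.sqrt vx := Real.sqrt_pos.mpr hvxpos
    set c : ℝ := K / (2 * Real.sqrt vx) with hcdef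
    have hc : 0 ≤ c := by positivity
    have h1c : 0 < 1 + c := by linarith
    refine ⟨1 / (1 + c), ⟨by positivity, by
      rw [div_le_one h1c]; linarith⟩, x, hxcard, ?_, hxminy⟩
    intro y hy
    -- variance of y is nonnegative
    have hvy : (0 : ℝ) ≤ ∑ i ∈ y, σ2 i :=
      Finset.sum_nonneg (fun i _ => le_trans zero_le_one (hσ i))
    set vy : ℝ := ∑ i ∈ y, σ2 i with hvydef
    -- tangent line inequality at vx
    have htan : K * Real.sqrt vy ≤ K * Real.sqrt vx + c * (vy - vx) := by
      have := sqrt_tangent vx vy hvxpos hvy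
      have h2 : c * (vy - vx) = K * ((vy - vx) / (2 * Real.sqrt vx)) := by
        rw [hcdef]; ring
      rw [h2]
      nlinarith [this, hK]
    -- linear scalarization inequality
    have hlin : (∑ i ∈ x, μ i) + c * vx ≤ (∑ i ∈ y, μ i) + c * vy := by
      have := hxminy y hy
      rw [← hvydef] at this
      linarith
    -- convert to the λ-form
    have hlam : (1 : ℝ) - 1 / (1 + c) = (1 / (1 + c)) * c := by
      field_simp
      ring
    rw [hlam]
    have hlampos : 0 < 1 / (1 + c) := by positivity
    calc 1 / (1 + c) * (∑ i ∈ x, μ i) + 1 / (1 + c) * c * vx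
        = 1 / (1 + c) * ((∑ i ∈ x, μ i) + c * vx) := by ring
      _ ≤ 1 / (1 + c) * ((∑ i ∈ y, μ i) + c * vy) :=
          mul_le_mul_of_nonneg_left hlin hlampos.le
      _ = 1 / (1 + c) * (∑ i ∈ y, μ i) + 1 / (1 + c) * c * vy := by ring
end
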